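/- arXiv:1803.03017 — 2 statements merged into one kernel-verified Lean document; each statement's English description precedes it below -/
import Mathlib

section
/- (Join Orthogonality Property) Let (W,S) be a Coxeter system and A ⊆ W̄ a subset admitting a join w in W̄ under the weak order. If v ∈ W̄ satisfies a ⊥ v for all a ∈ A, then w ⊥ v. -/
namespace CoxInf

variable {B : Type*} {W : Type*} [Group W] {M : CoxeterMatrix B}

/-- The inversion set `Φ_w` of `w⁻¹`, encoded via the canonical bijection between the
positive roots and the reflections: it corresponds to the set of left inversions of `w`. -/
def invSet (cs : CoxeterSystem M W) (w : W) : Set W :=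
  {t | cs.IsLeftInversion w t}

/-- The length-`n` prefix of an infinite word in the generators. -/
def prefixWord (ω : ℕ → B) (n : ℕ) : List B := List.ofFn fun i : Fin n => ω i

/-- `ω` is an infinite reduced expression: every finite prefix is reduced. -/
def IsInfRedExpr (cs : CoxeterSystem M W) (ω : ℕ → B) : Prop :=
  ∀ n, cs.IsReduced (prefixWord ω n)

/-- The elements of `W̄ = W ⊎ W_l`, represented as finite elements together with
infinite reduced expressions (an infinite reduced word is an equivalence class of
infinite reduced expressions having the same inversion set). -/
def barInv (cs : CoxeterSystem M W) : W ⊕ {ω : ℕ → B // IsInfRedExpr cs ω} → Set W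
  | .inl w => invSet cs w
  | .inr ω => ⋃ n, invSet cs (cs.wordProd (prefixWord ω.1 n))

end CoxInf

/-! The proof runs through the reflection cocycle `invSign`, read off from the permutation
representation of `W` on `W × ℤˣ`: it gives `Φ_{s w} = {s} ∆ s Φ_w s`, and this operation
`simpleAct` on inversion sets also makes sense on `W_l`.

Induct on the length of a finite `v`. If `s` is a left descent of `v`, orthogonality gives
`s ∉ Φ_a` for every `a ∈ A`, hence `s ∉ Φ_w`: otherwise `s w` would be a strictly smaller upper
bound of `A`. Applying `simpleAct` for `s` to `A`, `w` and `v` keeps `w` a join and keeps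
orthogonality, while `v` gets shorter. An infinite `v` is covered by its finite prefixes. -/

theorem Monotone.exists_forall_mem_iff_mem_iUnion {α : Type*} {T : ℕ → Set α} (hT : Monotone T)
    (a : α) : ∃ N, ∀ n, a ∈ T (N + n) ↔ a ∈ ⋃ k, T k := by
  by_cases ha : a ∈ ⋃ k, T k
  · obtain ⟨N, hN⟩ := Set.mem_iUnion.mp ha
    exact ⟨N, fun n => iff_of_true (hT (Nat.le_add_right N n) hN) ha⟩
  · exact ⟨0, fun n => iff_of_false (fun h => ha (Set.mem_iUnion_of_mem _ h)) ha⟩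

theorem even_count_map_range_two_mul {α : Type*} [BEq α] {f : ℕ → α} {m : ℕ}
    (hf : Function.Periodic f m) (a : α) : Even (((List.range (2 * m)).map f).count a) := by
  rw [two_mul, List.range_add, List.map_append, List.map_map, List.count_append]
  have : f ∘ (fun k => m + k) = f := funext fun k => by simpa [add_comm] using hf k
  rw [this]
  exact ⟨_, rfl⟩

theorem CoxeterSystem.alternatingWord_two_mul_succ {B : Type*} (i j : B) (m : ℕ) :
    alternatingWord i j (2 * (m + 1)) = i :: j :: alternatingWord i j (2 * m) := by
  rw [show 2 * (m + 1) = 2 * m + 1 + 1 by ring, alternatingWord_succ', alternatingWord_succ']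
  simp

open CoxeterSystem

namespace CoxInf

variable {B W : Type*} [Group W] {M : CoxeterMatrix B} (cs : CoxeterSystem M W)

local prefix:100 "s" => cs.simple
local prefix:100 "π" => cs.wordProd
local prefix:100 "ℓ" => cs.length
local prefix:100 "lis" => cs.leftInvSeq

section SignedRepresentation

open scoped Classical

theorem simple_mul_mul_simple_eq_simple_iff (i : B) (t : W) : s i * t * s i = s i ↔ t = s i := by
  rw [mul_eq_right, mul_eq_one_iff_inv_eq, inv_simple, eq_comm]

/-- The pair `(t, ε)` stands for the root `ε α_t`, on which `s i` acts as a reflection. -/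
noncomputable def signedReflection (i : B) : Equiv.Perm (W × ℤˣ) :=
  Function.Involutive.toPerm (fun p => (s i * p.1 * s i, if p.1 = s i then -p.2 else p.2)) <| by
    rintro ⟨t, e⟩
    have hconj : s i * (s i * t * s i) * s i = t := by simp [mul_assoc]
    simp only [hconj, simple_mul_mul_simple_eq_simple_iff]
    split_ifs <;> simp

theorem signedReflection_apply (i : B) (t : W) (e : ℤˣ) :
    signedReflection cs i (t, e) = (s i * t * s i, if t = s i then -e else e) :=
  rfl

noncomputable def wordPerm (ω : List B) : Equiv.Perm (W × ℤˣ) :=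
  (ω.map (signedReflection cs)).prod

theorem wordPerm_apply (ω : List B) (t : W) (e : ℤˣ) :
    wordPerm cs ω (t, e) =
      (π ω * t * (π ω)⁻¹, e * (-1) ^ (lis ω).count (π ω * t * (π ω)⁻¹)) := by
  induction ω generalizing t e with
  | nil => simp [wordPerm]
  | cons i ω ih =>
    have hconj : π (i :: ω) * t * (π (i :: ω))⁻¹ = MulAut.conj (s i) (π ω * t * (π ω)⁻¹) := by
      simp [wordProd_cons, mul_assoc]
    have hcount : (lis (i :: ω)).count (MulAut.conj (s i) (π ω * t * (π ω)⁻¹)) =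
        (lis ω).count (π ω * t * (π ω)⁻¹) + if π ω * t * (π ω)⁻¹ = s i then 1 else 0 := by
      rw [leftInvSeq, List.count_cons, List.count_map_of_injective _ _ (MulAut.conj _).injective]
      simp only [MulAut.conj_apply, inv_simple, beq_iff_eq, eq_comm (a := s i),
        simple_mul_mul_simple_eq_simple_iff]
    rw [hconj, hcount]
    simp only [wordPerm, List.map_cons, List.prod_cons, Equiv.Perm.mul_apply] at ih ⊢
    rw [ih]
    split_ifs with h <;> simp [signedReflection_apply, MulAut.conj_apply, h, pow_succ]

theorem wordPerm_alternatingWord (i j : B) (m : ℕ) :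
    wordPerm cs (alternatingWord i j (2 * m)) =
      (signedReflection cs i * signedReflection cs j) ^ m := by
  induction m with
  | zero => rfl
  | succ m ih =>
    rw [alternatingWord_two_mul_succ, pow_succ', ← ih]
    simp [wordPerm, mul_assoc]

theorem leftInvSeq_alternatingWord (i j : B) (m : ℕ) :
    lis (alternatingWord i j (2 * m)) =
      (List.range (2 * m)).map fun k => s i * (s j * s i) ^ k := by
  apply List.ext_getElem (by simp)
  intro k hk _
  rw [getElem_leftInvSeq_alternatingWord cs i j m k (by simpa using hk),
    prod_alternatingWord_eq_mul_pow]
  simp [Nat.mul_add_div]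

theorem isLiftable_signedReflection : M.IsLiftable (signedReflection cs) := by
  intro i j
  have hper : Function.Periodic (fun k => s i * (s j * s i) ^ k) (M i j) := fun k => by
    simp [pow_add, simple_mul_simple_pow']
  rw [← wordPerm_alternatingWord]
  ext ⟨t, e⟩ : 1
  rw [wordPerm_apply, leftInvSeq_alternatingWord, prod_alternatingWord_eq_mul_pow,
    (even_count_map_range_two_mul hper _).neg_one_pow]
  simp [simple_mul_simple_pow]

noncomputable def signedRepr : W →* Equiv.Perm (W × ℤˣ) :=
  cs.lift ⟨signedReflection cs, isLiftable_signedReflection cs⟩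

theorem signedRepr_wordProd (ω : List B) : signedRepr cs (π ω) = wordPerm cs ω := by
  rw [wordProd, map_list_prod, List.map_map, wordPerm]
  congr 2
  funext i
  exact cs.lift_apply_simple _ i

noncomputable def invSign (w t : W) : ℤˣ := (signedRepr cs w (t, 1)).2

theorem invSign_wordProd (ω : List B) (t : W) :
    invSign cs (π ω) t = (-1) ^ (lis ω).count (π ω * t * (π ω)⁻¹) := by
  rw [invSign, signedRepr_wordProd, wordPerm_apply, one_mul]

theorem signedRepr_apply (w t : W) (e : ℤˣ) :
    signedRepr cs w (t, e) = (w * t * w⁻¹, e * invSign cs w t) := by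
  obtain ⟨ω, rfl⟩ := cs.wordProd_surjective w
  rw [invSign_wordProd, signedRepr_wordProd, wordPerm_apply]

theorem invSign_mul (x y t : W) :
    invSign cs (x * y) t = invSign cs y t * invSign cs x (y * t * y⁻¹) := by
  have h := congrArg Prod.snd (signedRepr_apply cs (x * y) t 1)
  rwa [map_mul, Equiv.Perm.mul_apply, signedRepr_apply, signedRepr_apply, one_mul, one_mul,
    eq_comm] at h

theorem invSign_simple (i : B) (t : W) : invSign cs (s i) t = if t = s i then -1 else 1 := by
  rw [invSign, signedRepr, lift_apply_simple, signedReflection_apply]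

theorem invSign_one (t : W) : invSign cs 1 t = 1 := by
  simp [invSign]

theorem invSign_self {t : W} (ht : cs.IsReflection t) : invSign cs t t = -1 := by
  obtain ⟨u, i, rfl⟩ := ht
  have hconj : u⁻¹ * (u * s i * u⁻¹) * u⁻¹⁻¹ = s i := by group
  have hinv : invSign cs u⁻¹ (u * s i * u⁻¹) * invSign cs u (s i) = 1 := by
    rw [← invSign_one cs (u * s i * u⁻¹), ← mul_inv_cancel u, invSign_mul, hconj]
  calc invSign cs (u * s i * u⁻¹) (u * s i * u⁻¹)
      = invSign cs u⁻¹ (u * s i * u⁻¹) * invSign cs (u * s i) (s i) := by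
        rw [invSign_mul, hconj]
    _ = invSign cs u⁻¹ (u * s i * u⁻¹) * (invSign cs (s i) (s i) * invSign cs u (s i)) := by
        rw [invSign_mul, inv_simple, simple_mul_simple_self, one_mul]
    _ = -1 := by
        rw [invSign_simple, if_pos rfl, neg_one_mul, mul_neg, hinv]

theorem length_mul_lt_of_invSign_eq_neg_one {w t : W} (h : invSign cs w t = -1) :
    ℓ (w * t) < ℓ w := by
  obtain ⟨ω, hω, rfl⟩ := cs.exists_isReduced w
  rw [invSign_wordProd] at h
  have hmem : π ω * t * (π ω)⁻¹ ∈ lis ω := by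
    refine List.count_pos_iff.mp (Nat.pos_of_ne_zero fun h0 => ?_)
    rw [h0, pow_zero] at h
    exact absurd h (by decide)
  obtain ⟨j, hj, hjt⟩ := List.getElem_of_mem hmem
  have herase : π ω * t = π (ω.eraseIdx j) := by
    rw [← getD_leftInvSeq_mul_wordProd, List.getD_eq_getElem _ _ hj, hjt]
    group
  rw [length_leftInvSeq] at hj
  calc ℓ (π ω * t) ≤ (ω.eraseIdx j).length := herase ▸ cs.length_wordProd_le _
    _ < ω.length := by rw [List.length_eraseIdx_of_lt hj]; omega
    _ = ℓ (π ω) := hω.symm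

theorem isRightInversion_iff_invSign {w t : W} (ht : cs.IsReflection t) :
    cs.IsRightInversion w t ↔ invSign cs w t = -1 := by
  refine ⟨fun hwt => ?_, fun h => ⟨ht, length_mul_lt_of_invSign_eq_neg_one cs h⟩⟩
  have hwtt : w * t * t = w := by rw [mul_assoc, ht.mul_self, mul_one]
  have hsign : invSign cs w t = -invSign cs (w * t) t := by
    have := invSign_mul cs (w * t) t t
    rwa [hwtt, mul_inv_cancel_right, invSign_self cs ht, neg_one_mul] at this
  rcases Int.units_eq_one_or (invSign cs w t) with h1 | h1
  · have h2 : invSign cs (w * t) t = -1 := neg_eq_iff_eq_neg.mp (hsign ▸ h1)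
    have := length_mul_lt_of_invSign_eq_neg_one cs h2
    rw [hwtt] at this
    exact absurd hwt.2 (by omega)
  · exact h1

end SignedRepresentation

section InversionSets

/-- `simpleAct i` carries the inversion set of `w` to that of `s i * w` (`invSet_simple_mul`). -/
def simpleAct (i : B) (X : Set W) : Set W :=
  symmDiff {s i} ((fun t => s i * t * s i) ⁻¹' X)

variable {cs}

theorem mem_invSet_iff {w t : W} :
    t ∈ invSet cs w ↔ cs.IsReflection t ∧ invSign cs w⁻¹ t = -1 := by
  change cs.IsLeftInversion w t ↔ _
  rw [← isRightInversion_inv_iff]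
  exact ⟨fun h => ⟨h.1, (isRightInversion_iff_invSign cs h.1).mp h⟩,
    fun h => (isRightInversion_iff_invSign cs h.1).mpr h.2⟩

theorem mem_invSet_mul_iff {x y t : W} :
    t ∈ invSet cs (x * y) ↔ (t ∈ invSet cs x ↔ x⁻¹ * t * x ∉ invSet cs y) := by
  have hrefl : cs.IsReflection (x⁻¹ * t * x) ↔ cs.IsReflection t := by
    simpa using cs.isReflection_conj_iff x⁻¹ t
  simp only [mem_invSet_iff, hrefl, mul_inv_rev, invSign_mul, inv_inv]
  by_cases ht : cs.IsReflection t
  · rcases Int.units_eq_one_or (invSign cs x⁻¹ t) with h | h <;>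
      rcases Int.units_eq_one_or (invSign cs y⁻¹ (x⁻¹ * t * x)) with h' | h' <;>
      simp [h, h', ht]
  · simp [ht]

theorem mem_simpleAct {i : B} {X : Set W} {t : W} :
    t ∈ simpleAct cs i X ↔ (t = s i ↔ s i * t * s i ∉ X) := by
  simp only [simpleAct, Set.mem_symmDiff, Set.mem_singleton_iff, Set.mem_preimage]
  tauto

theorem simple_mem_simpleAct {i : B} {X : Set W} : s i ∈ simpleAct cs i X ↔ s i ∉ X := by
  simp [mem_simpleAct]

theorem simpleAct_simpleAct (i : B) (X : Set W) : simpleAct cs i (simpleAct cs i X) = X := by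
  ext t
  simp only [mem_simpleAct, simple_mul_mul_simple_eq_simple_iff]
  simp only [mul_assoc, simple_mul_simple_cancel_left]
  simp only [← mul_assoc, simple_mul_simple_cancel_right]
  tauto

theorem simpleAct_mono {i : B} {X Y : Set W} (h : X ⊆ Y) (hs : s i ∈ X ↔ s i ∈ Y) :
    simpleAct cs i X ⊆ simpleAct cs i Y := by
  intro t ht
  rw [mem_simpleAct] at ht ⊢
  by_cases hts : t = s i
  · subst hts
    simp_all
  · simp only [hts, false_iff, not_not] at ht ⊢
    exact h ht

theorem disjoint_simpleAct {i : B} {X Y : Set W} (h : Disjoint X Y) (hs : s i ∈ Y) :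
    Disjoint (simpleAct cs i X) (simpleAct cs i Y) := by
  rw [Set.disjoint_left]
  intro t htX htY
  rw [mem_simpleAct] at htX htY
  by_cases hts : t = s i
  · subst hts
    simp_all
  · simp only [hts, false_iff, not_not] at htX htY
    exact Set.disjoint_left.mp h htX htY

theorem iUnion_simpleAct {ι : Type*} [Nonempty ι] {i : B} {T : ι → Set W}
    (hT : ∀ n, s i ∈ T n ↔ s i ∈ ⋃ n, T n) :
    ⋃ n, simpleAct cs i (T n) = simpleAct cs i (⋃ n, T n) := by
  ext t
  set U := ⋃ n, T n
  rw [Set.mem_iUnion, mem_simpleAct]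
  simp only [mem_simpleAct]
  by_cases hts : t = s i
  · subst hts
    simp only [mul_assoc, simple_mul_simple_cancel_left, true_iff, hT]
    exact ⟨fun ⟨_, h⟩ => h, fun h => ⟨Classical.arbitrary ι, h⟩⟩
  · simp only [hts, false_iff, not_not]
    exact ⟨fun ⟨n, h⟩ => Set.mem_iUnion_of_mem n h, Set.mem_iUnion.mp⟩

theorem finite_simpleAct {i : B} {X : Set W} (hX : X.Finite) : (simpleAct cs i X).Finite := by
  refine ((Set.finite_singleton _).union (hX.preimage ?_)).subset symmDiff_le_sup
  intro x _ y _ h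
  simpa using h

theorem invSet_one : invSet cs 1 = ∅ := by
  ext t
  simp [invSet, IsLeftInversion]

theorem invSet_simple (i : B) : invSet cs (s i) = {s i} := by
  ext t
  simp only [invSet, IsLeftInversion, Set.mem_singleton_iff, length_simple]
  change cs.IsReflection t ∧ ℓ (t * s i) < 1 ↔ t = s i
  rw [Nat.lt_one_iff, length_eq_zero_iff, mul_eq_one_iff_eq_inv, inv_simple]
  exact ⟨And.right, fun h => ⟨h ▸ cs.isReflection_simple i, h⟩⟩

theorem invSet_simple_mul (i : B) (w : W) :
    invSet cs (s i * w) = simpleAct cs i (invSet cs w) := by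
  ext t
  rw [mem_invSet_mul_iff, mem_simpleAct, invSet_simple, inv_simple, Set.mem_singleton_iff]

theorem simple_mem_invSet_iff {i : B} {w : W} : s i ∈ invSet cs w ↔ ℓ (s i * w) < ℓ w :=
  ⟨And.right, fun h => ⟨cs.isReflection_simple i, h⟩⟩

theorem length_simple_mul_of_mem {i : B} {w : W} (h : s i ∈ invSet cs w) :
    ℓ (s i * w) + 1 = ℓ w := by
  have := simple_mem_invSet_iff.mp h
  rcases cs.length_simple_mul w i with h' | h' <;> omega

theorem length_simple_mul_of_notMem {i : B} {w : W} (h : s i ∉ invSet cs w) :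
    ℓ (s i * w) = ℓ w + 1 := by
  rw [simple_mem_invSet_iff] at h
  rcases cs.length_simple_mul w i with h' | h' <;> omega

theorem leftDescent_induction {p : W → Prop} (one : p 1)
    (step : ∀ w i, s i ∈ invSet cs w → p (s i * w) → p w) (w : W) : p w := by
  induction hn : ℓ w using Nat.strong_induction_on generalizing w with
  | _ n ih =>
    rcases eq_or_ne w 1 with rfl | hw
    · exact one
    obtain ⟨i, hi⟩ := cs.exists_leftDescent_of_ne_one hw
    exact step w i ⟨cs.isReflection_simple i, hi⟩ (ih _ (hn ▸ hi) _ rfl)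

theorem finite_invSet (w : W) : (invSet cs w).Finite := by
  induction w using leftDescent_induction (cs := cs) with
  | one => simp [invSet_one]
  | step w i _ h =>
    rw [← simple_mul_simple_cancel_left (cs := cs) (i := i) (w := w), invSet_simple_mul]
    exact finite_simpleAct h

theorem invSet_subset_invSet_mul {x y : W} (h : ℓ (x * y) = ℓ x + ℓ y) :
    invSet cs x ⊆ invSet cs (x * y) := by
  rintro t ⟨ht, hlt⟩
  refine ⟨ht, ?_⟩
  have := cs.length_mul_le (t * x) y
  rw [mul_assoc] at this
  omega

theorem length_add_length_inv_mul {a w : W} (h : invSet cs a ⊆ invSet cs w) :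
    ℓ a + ℓ (a⁻¹ * w) = ℓ w := by
  induction a using leftDescent_induction (cs := cs) generalizing w with
  | one => simp
  | step a i ha ih =>
    have hw := h ha
    have hsub : invSet cs (s i * a) ⊆ invSet cs (s i * w) := by
      rw [invSet_simple_mul, invSet_simple_mul]
      exact simpleAct_mono h (iff_of_true ha hw)
    have := ih hsub
    rw [mul_inv_rev, inv_simple, mul_assoc, simple_mul_simple_cancel_left] at this
    have := length_simple_mul_of_mem ha
    have := length_simple_mul_of_mem hw
    omega

theorem invSet_subset_invSet_simple_mul {a w : W} {i : B} (haw : invSet cs a ⊆ invSet cs w)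
    (hw : s i ∈ invSet cs w) (ha : s i ∉ invSet cs a) : invSet cs a ⊆ invSet cs (s i * w) := by
  set z := a⁻¹ * w
  have hlen : ℓ a + ℓ z = ℓ w := length_add_length_inv_mul haw
  have hwz : w = a * z := by simp [z]
  -- `w = a z` with lengths adding, so the inversion `s i` of `w` comes from `z`
  have ht : a⁻¹ * s i * a ∈ invSet cs z := by
    rw [hwz] at hw
    simpa [ha] using mem_invSet_mul_iff.mp hw
  have hsw : s i * w = a * (a⁻¹ * s i * a * z) := by simp [hwz, mul_assoc]
  have h1 := length_simple_mul_of_mem hw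
  have h2 := cs.length_mul_le a (a⁻¹ * s i * a * z)
  have h3 : ℓ (a⁻¹ * s i * a * z) < ℓ z := ht.2
  rw [hsw] at h1 ⊢
  exact invSet_subset_invSet_mul (by omega)

end InversionSets

section InfiniteWords

variable {cs}

theorem length_prefixWord (ω : ℕ → B) (n : ℕ) : (prefixWord ω n).length = n := by
  simp [prefixWord]

theorem take_prefixWord (ω : ℕ → B) {m n : ℕ} (h : m ≤ n) :
    (prefixWord ω n).take m = prefixWord ω m :=
  List.ext_getElem (by simp [length_prefixWord, h]) fun k _ _ => by simp [prefixWord]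

theorem wordProd_prefixWord_succ (ω : ℕ → B) (n : ℕ) :
    π (prefixWord ω (n + 1)) = π (prefixWord ω n) * s (ω n) := by
  rw [prefixWord, List.ofFn_succ', wordProd_concat]
  rfl

theorem IsInfRedExpr.length_wordProd {ω : ℕ → B} (hω : IsInfRedExpr cs ω) (n : ℕ) :
    ℓ (π (prefixWord ω n)) = n :=
  (hω n).trans (length_prefixWord ω n)

theorem IsInfRedExpr.monotone_invSet {ω : ℕ → B} (hω : IsInfRedExpr cs ω) :
    Monotone fun n => invSet cs (π (prefixWord ω n)) := by
  refine monotone_nat_of_le_succ fun n => ?_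
  rw [wordProd_prefixWord_succ]
  refine invSet_subset_invSet_mul ?_
  rw [← wordProd_prefixWord_succ, hω.length_wordProd, hω.length_wordProd, length_simple]

theorem barInv_inr (ω : {ω : ℕ → B // IsInfRedExpr cs ω}) :
    barInv cs (.inr ω) = ⋃ n, invSet cs (π (prefixWord ω.1 n)) := rfl

theorem exists_invSet_between {X F : Set W} (hX : X ∈ Set.range (barInv cs)) (hF : F.Finite)
    (hFX : F ⊆ X) : ∃ x, F ⊆ invSet cs x ∧ invSet cs x ⊆ X := by
  obtain ⟨w | ⟨ω, hω⟩, rfl⟩ := hX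
  · exact ⟨w, hFX, subset_rfl⟩
  · rw [← hF.coe_toFinset] at hFX ⊢
    obtain ⟨n, hn⟩ := hω.monotone_invSet.directed_le.exists_mem_subset_of_finset_subset_biUnion hFX
    exact ⟨_, hn, Set.subset_iUnion (fun n => invSet cs (π (prefixWord ω n))) n⟩

theorem exists_barInv_inr_eq_iUnion {x : ℕ → W} {b : ℕ → B}
    (hx : ∀ n, x (n + 1) = x n * s (b n)) (hlen : ∀ n, ℓ (x (n + 1)) = ℓ (x n) + 1) :
    ∃ ω, barInv cs (.inr ω) = ⋃ n, invSet cs (x n) := by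
  obtain ⟨ρ, hρ, hx0⟩ := cs.exists_isReduced (x 0)
  set L := ρ.length
  set τ : ℕ → B := fun k => if h : k < L then ρ[k] else b (k - L)
  have hτL : prefixWord τ L = ρ :=
    List.ext_getElem (length_prefixWord τ L) fun k _ _ => by simp [prefixWord, τ]
  have hprod : ∀ n, π (prefixWord τ (L + n)) = x n := by
    intro n
    induction n with
    | zero => rw [add_zero, hτL, hx0]
    | succ n ih => rw [← add_assoc, wordProd_prefixWord_succ, ih, hx]; simp [τ]
  have hlenx : ∀ n, ℓ (x n) = L + n := by
    intro n
    induction n with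
    | zero => rw [hx0, hρ]; rfl
    | succ n ih => rw [hlen, ih, add_assoc]
  have hτ : IsInfRedExpr cs τ := by
    intro m
    have hred : cs.IsReduced (prefixWord τ (L + m)) := by
      change ℓ _ = _
      rw [hprod, hlenx, length_prefixWord]
    simpa [take_prefixWord] using hred.take m
  refine ⟨⟨τ, hτ⟩, ?_⟩
  rw [barInv_inr]
  simp_rw [← hprod, add_comm L]
  exact (hτ.monotone_invSet.iSup_nat_add L).symm

theorem simpleAct_mem_range {X : Set W} (hX : X ∈ Set.range (barInv cs)) (i : B) :
    simpleAct cs i X ∈ Set.range (barInv cs) := by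
  obtain ⟨w | ⟨ω, hω⟩, rfl⟩ := hX
  · exact ⟨.inl (s i * w), invSet_simple_mul i w⟩
  obtain ⟨N, hN⟩ := hω.monotone_invSet.exists_forall_mem_iff_mem_iUnion (s i)
  have hlen : ∀ n,
      ℓ (s i * π (prefixWord ω (N + n + 1))) = ℓ (s i * π (prefixWord ω (N + n))) + 1 := by
    intro n
    have h1 := hN n
    have h2 := hN (n + 1)
    rw [← add_assoc] at h2
    by_cases hs : s i ∈ ⋃ k, invSet cs (π (prefixWord ω k))
    · have := length_simple_mul_of_mem (h1.mpr hs)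
      have := length_simple_mul_of_mem (h2.mpr hs)
      simp only [hω.length_wordProd] at *
      omega
    · have := length_simple_mul_of_notMem (mt h1.mp hs)
      have := length_simple_mul_of_notMem (mt h2.mp hs)
      simp only [hω.length_wordProd] at *
      omega
  obtain ⟨ω', hω'⟩ := exists_barInv_inr_eq_iUnion (x := fun n => s i * π (prefixWord ω (N + n)))
    (b := fun n => ω (N + n)) (fun n => by simp [← add_assoc, wordProd_prefixWord_succ, mul_assoc])
    hlen
  have hU : ⋃ n, invSet cs (π (prefixWord ω (N + n))) = ⋃ n, invSet cs (π (prefixWord ω n)) := by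
    simp_rw [add_comm N]
    exact hω.monotone_invSet.iSup_nat_add N
  rw [← hU] at hN
  refine ⟨.inr ω', ?_⟩
  rw [hω', barInv_inr]
  simp_rw [invSet_simple_mul]
  rw [iUnion_simpleAct hN, hU]

theorem subset_simpleAct_of_subset {i : B} {X Y : Set W} (hX : X ∈ Set.range (barInv cs))
    (hY : Y ∈ Set.range (barInv cs)) (hYX : Y ⊆ X) (hsX : s i ∈ X) (hsY : s i ∉ Y) :
    Y ⊆ simpleAct cs i X := by
  intro t ht
  obtain ⟨y, hty, hyY⟩ := exists_invSet_between hY (Set.finite_singleton t)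
    (Set.singleton_subset_iff.mpr ht)
  obtain ⟨x, hyx, hxX⟩ := exists_invSet_between hX ((finite_invSet y).insert (s i))
    (Set.insert_subset hsX (hyY.trans hYX))
  have hsx : s i ∈ invSet cs x := hyx (Set.mem_insert _ _)
  have hy := invSet_subset_invSet_simple_mul ((Set.subset_insert _ _).trans hyx) hsx
    (fun h => hsY (hyY h))
  rw [invSet_simple_mul] at hy
  exact simpleAct_mono hxX (iff_of_true hsx hsX) (hy (hty rfl))

end InfiniteWords

section Join

variable {cs}

theorem eq_empty_of_isLeast_empty {X : Set W}
    (hX : IsLeast (Set.range (barInv cs) ∩ upperBounds ∅) X) : X = ∅ :=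
  Set.subset_empty_iff.mp (hX.2 ⟨⟨.inl 1, invSet_one⟩, by simp⟩)

theorem simple_notMem_of_isLeast {𝒜 : Set (Set W)} {X : Set W} {i : B}
    (h𝒜 : 𝒜 ⊆ Set.range (barInv cs)) (hX : IsLeast (Set.range (barInv cs) ∩ upperBounds 𝒜) X)
    (hs : ∀ Y ∈ 𝒜, s i ∉ Y) : s i ∉ X := by
  intro hsX
  have hX' : X ⊆ simpleAct cs i X :=
    hX.2 ⟨simpleAct_mem_range hX.1.1 i, fun Y hY =>
      subset_simpleAct_of_subset hX.1.1 (h𝒜 hY) (hX.1.2 hY) hsX (hs Y hY)⟩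
  exact simple_mem_simpleAct.mp (hX' hsX) hsX

theorem isLeast_image_simpleAct {𝒜 : Set (Set W)} {X : Set W} {i : B} (h𝒜 : 𝒜.Nonempty)
    (hX : IsLeast (Set.range (barInv cs) ∩ upperBounds 𝒜) X) (hs : s i ∉ X) :
    IsLeast (Set.range (barInv cs) ∩ upperBounds (simpleAct cs i '' 𝒜)) (simpleAct cs i X) := by
  have hsY : ∀ Y ∈ 𝒜, s i ∉ Y := fun Y hY h => hs (hX.1.2 hY h)
  refine ⟨⟨simpleAct_mem_range hX.1.1 i, ?_⟩, ?_⟩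
  · rintro _ ⟨Y, hY, rfl⟩
    exact simpleAct_mono (hX.1.2 hY) (iff_of_false (hsY Y hY) hs)
  · rintro Z ⟨hZ, hZub⟩
    obtain ⟨Y₀, hY₀⟩ := h𝒜
    have hsZ : s i ∈ Z := hZub ⟨Y₀, hY₀, rfl⟩ (simple_mem_simpleAct.mpr (hsY Y₀ hY₀))
    have hXZ : X ⊆ simpleAct cs i Z := by
      refine hX.2 ⟨simpleAct_mem_range hZ i, fun Y hY => ?_⟩
      rw [← simpleAct_simpleAct i Y]
      exact simpleAct_mono (hZub ⟨Y, hY, rfl⟩)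
        (iff_of_true (simple_mem_simpleAct.mpr (hsY Y hY)) hsZ)
    rw [← simpleAct_simpleAct i Z]
    exact simpleAct_mono hXZ (iff_of_false hs (simple_mem_simpleAct.not_left.mpr hsZ))

theorem disjoint_invSet_of_isLeast {𝒜 : Set (Set W)} {X : Set W} (h𝒜 : 𝒜 ⊆ Set.range (barInv cs))
    (hX : IsLeast (Set.range (barInv cs) ∩ upperBounds 𝒜) X) (v : W)
    (horth : ∀ Y ∈ 𝒜, Disjoint Y (invSet cs v)) : Disjoint X (invSet cs v) := by
  induction v using leftDescent_induction (cs := cs) generalizing 𝒜 X with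
  | one => simp [invSet_one]
  | step v i hv ih =>
    rcases 𝒜.eq_empty_or_nonempty with rfl | hne
    · simp [eq_empty_of_isLeast_empty hX]
    have hsY : ∀ Y ∈ 𝒜, s i ∉ Y := fun Y hY h => Set.disjoint_left.mp (horth Y hY) h hv
    have hsX := simple_notMem_of_isLeast h𝒜 hX hsY
    have hX' := isLeast_image_simpleAct hne hX hsX
    have key := ih (Set.image_subset_iff.mpr fun Y hY => simpleAct_mem_range (h𝒜 hY) i) hX' (by
      rintro _ ⟨Y, hY, rfl⟩
      rw [invSet_simple_mul]
      exact disjoint_simpleAct (horth Y hY) hv)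
    rw [invSet_simple_mul] at key
    simpa only [simpleAct_simpleAct] using
      disjoint_simpleAct key.symm (simple_mem_simpleAct.mpr hsX) |>.symm

end Join

end CoxInf

open CoxInf in
/-- Join Orthogonality Property: if `A ⊆ W̄` admits a join `w` in `W̄` under the weak order
and `v ∈ W̄` satisfies `a ⊥ v` (`Φ_a ∩ Φ_v = ∅`) for all `a ∈ A`, then `w ⊥ v`. -/
theorem join_orthogonality_property
    {B : Type*} {W : Type*} [Group W] {M : CoxeterMatrix B} (cs : CoxeterSystem M W)
    (A : Set (W ⊕ {ω : ℕ → B // IsInfRedExpr cs ω}))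
    (w : W ⊕ {ω : ℕ → B // IsInfRedExpr cs ω})
    (hub : ∀ a ∈ A, barInv cs a ⊆ barInv cs w)
    (hlub : ∀ u : W ⊕ {ω : ℕ → B // IsInfRedExpr cs ω},
      (∀ a ∈ A, barInv cs a ⊆ barInv cs u) → barInv cs w ⊆ barInv cs u)
    (v : W ⊕ {ω : ℕ → B // IsInfRedExpr cs ω})
    (horth : ∀ a ∈ A, barInv cs a ∩ barInv cs v = ∅) :
    barInv cs w ∩ barInv cs v = ∅ := by
  have hjoin : IsLeast (Set.range (barInv cs) ∩ upperBounds (barInv cs '' A)) (barInv cs w) :=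
    ⟨⟨⟨w, rfl⟩, Set.forall_mem_image.mpr hub⟩,
      fun _ ⟨⟨u, hu⟩, hub'⟩ => hu ▸ hlub u (Set.forall_mem_image.mp (hu ▸ hub'))⟩
  refine Set.eq_empty_of_forall_notMem fun t ⟨htw, htv⟩ => ?_
  obtain ⟨v₀, htv₀, hv₀⟩ := exists_invSet_between ⟨v, rfl⟩ (Set.finite_singleton t)
    (Set.singleton_subset_iff.mpr htv)
  have hdisj := disjoint_invSet_of_isLeast (Set.image_subset_range _ _) hjoin v₀ <| by
    rintro _ ⟨a, ha, rfl⟩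
    exact Set.disjoint_iff_inter_eq_empty.mpr (Set.subset_empty_iff.mp
      (horth a ha ▸ Set.inter_subset_inter_right _ hv₀))
  exact Set.disjoint_left.mp hdisj htw (htv₀ rfl)
end

section
/- Let Φ be an irreducible crystallographic root system with positive system Φ⁺ and simple system Π, and L ⊊ Π. If α = k₁β + k₂γ with α, β, γ ∈ Φ⁺ and k₁, k₂ ∈ ℝ_{≥0}, then d_L(α) = k₁·d_L(β) + k₂·d_L(γ). -/
open scoped RealInnerProductSpace

namespace AffineBiclosed

variable {V : Type*} [NormedAddCommGroup V] [InnerProductSpace ℝ V]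

/-- An irreducible crystallographic root system in the Euclidean space `V`. -/
structure IsIrrCrystRootSystem (Φ : Set V) : Prop where
  finite : Φ.Finite
  nonzero : (0 : V) ∉ Φ
  spanning : Submodule.span ℝ Φ = ⊤
  reflect_mem : ∀ α ∈ Φ, ∀ β ∈ Φ, β - (2 * ⟪β, α⟫ / ⟪α, α⟫) • α ∈ Φ
  crystallographic : ∀ α ∈ Φ, ∀ β ∈ Φ, ∃ k : ℤ, (k : ℝ) = 2 * ⟪β, α⟫ / ⟪α, α⟫
  reduced : ∀ α ∈ Φ, ∀ t : ℝ, t • α ∈ Φ → t = 1 ∨ t = -1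
  irreducible : ∀ Φ₁ Φ₂ : Set V, Φ₁ ∪ Φ₂ = Φ → Disjoint Φ₁ Φ₂ →
      (∀ α ∈ Φ₁, ∀ β ∈ Φ₂, ⟪α, β⟫ = 0) → Φ₁ = ∅ ∨ Φ₂ = ∅

/-- `Pos` is a positive system of the root system `Φ`. -/
def IsPositiveSystem (Φ Pos : Set V) : Prop :=
  ∃ f : V →ₗ[ℝ] ℝ, (∀ α ∈ Φ, f α ≠ 0) ∧ Pos = {α ∈ Φ | 0 < f α}

/-- The simple system of a positive system: its indecomposable elements. -/
def simples (Pos : Set V) : Set V :=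
  {α ∈ Pos | ¬ ∃ β ∈ Pos, ∃ γ ∈ Pos, α = β + γ}

/-- The root subsystem of `Φ` generated by a set `Δ` of simple roots. -/
def subsys (Φ Δ : Set V) : Set V := Φ ∩ (Submodule.span ℝ Δ : Set V)

/-- The biclosed set `Ψ⁺_{L,M} = (Ψ⁺ \ Φ_L) ∪ Φ_M` in `Φ`. -/
def posLM (Φ Pos L M : Set V) : Set V := (Pos \ subsys Φ L) ∪ subsys Φ M

section Closure

variable {E : Type*} [AddCommGroup E] [Module ℝ E]

/-- `Γ` is closed in `T`. -/
def IsClosedIn (T Γ : Set E) : Prop :=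
  Γ ⊆ T ∧ ∀ a ∈ Γ, ∀ b ∈ Γ, ∀ k₁ k₂ : ℝ, 0 ≤ k₁ → 0 ≤ k₂ →
    k₁ • a + k₂ • b ∈ T → k₁ • a + k₂ • b ∈ Γ

/-- `Γ` is biclosed in `T`. -/
def IsBiclosedIn (T Γ : Set E) : Prop := IsClosedIn T Γ ∧ IsClosedIn T (T \ Γ)

/-- The closure of `X` in `T`: the smallest subset of `T` closed in `T` containing `X`. -/
def closureIn (T X : Set E) : Set E := ⋂₀ {Γ : Set E | X ⊆ Γ ∧ IsClosedIn T Γ}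

end Closure

/-- For `Γ ⊆ Φ`, the set `Γ̂ ⊆ V × ℝ`, where `δ = (0,1)`; positivity is measured by the
standard positive system `Pos`. -/
def hat (Pos Γ : Set V) : Set (V × ℝ) :=
  {x | ∃ α ∈ Γ, ∃ n : ℕ, x.1 = α ∧
    ((α ∈ Pos ∧ x.2 = (n : ℝ)) ∨ (α ∉ Pos ∧ x.2 = (n : ℝ) + 1))}

/-- The reflection in the affine root `a`, as a function on `V × ℝ`, with respect to the
degenerate bilinear form `⟨(v,s),(w,t)⟩ = ⟪v,w⟫`. -/
noncomputable def reflVec (a : V × ℝ) (x : V × ℝ) : V × ℝ :=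
  x - (2 * ⟪x.1, a.1⟫ / ⟪a.1, a.1⟫) • a

theorem reflVec_involutive (a : V × ℝ) : Function.Involutive (reflVec a) := by
  intro x
  by_cases h : ⟪a.1, a.1⟫ = 0
  · simp only [reflVec, h, div_zero, zero_smul, sub_zero]
  · unfold reflVec
    have h1 : (x - (2 * ⟪x.1, a.1⟫ / ⟪a.1, a.1⟫) • a).1
        = x.1 - (2 * ⟪x.1, a.1⟫ / ⟪a.1, a.1⟫) • a.1 := rfl
    rw [h1]
    have key : 2 * ⟪x.1 - (2 * ⟪x.1, a.1⟫ / ⟪a.1, a.1⟫) • a.1, a.1⟫ / ⟪a.1, a.1⟫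
        = -(2 * ⟪x.1, a.1⟫ / ⟪a.1, a.1⟫) := by
      rw [inner_sub_left, real_inner_smul_left]
      field_simp
      ring
    rw [key, neg_smul, sub_neg_eq_add, sub_add_cancel]

/-- The reflection in the affine root `a`, as a permutation of `V × ℝ`. -/
noncomputable def reflPerm (a : V × ℝ) : Equiv.Perm (V × ℝ) :=
  Function.Involutive.toPerm _ (reflVec_involutive a)

/-- The affine Weyl group of `Φ`, realized as the group of permutations of `V × ℝ`
generated by the reflections in the affine roots. -/
noncomputable def affineWeyl (Φ Pos : Set V) : Subgroup (Equiv.Perm (V × ℝ)) :=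
  Subgroup.closure (reflPerm '' hat Pos Φ)

/-- The inversion set `Φ_w = {a ∈ Φ̃⁺ | w⁻¹ a ∈ −Φ̃⁺}`. -/
def invSetOf (Φ Pos : Set V) (w : Equiv.Perm (V × ℝ)) : Set (V × ℝ) :=
  {a ∈ hat Pos Φ | -(w⁻¹ a) ∈ hat Pos Φ}

/-- The product of the reflections in the listed affine roots. -/
noncomputable def wordProd (l : List (V × ℝ)) : Equiv.Perm (V × ℝ) :=
  (l.map reflPerm).prod

/-- The simple affine roots: the indecomposable elements of `Φ̃⁺`. -/
def affSimples (Φ Pos : Set V) : Set (V × ℝ) :=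
  {a ∈ hat Pos Φ | ¬ ∃ b ∈ hat Pos Φ, ∃ c ∈ hat Pos Φ, a = b + c}

/-- `l` is a reduced word (in the simple affine reflections). -/
def IsReducedWord (Φ Pos : Set V) (l : List (V × ℝ)) : Prop :=
  (∀ a ∈ l, a ∈ affSimples Φ Pos) ∧
    ∀ l' : List (V × ℝ), (∀ a ∈ l', a ∈ affSimples Φ Pos) →
      wordProd l' = wordProd l → l.length ≤ l'.length

/-- The length-`n` prefix of an infinite word. -/
def prefixWord (ω : ℕ → V × ℝ) (n : ℕ) : List (V × ℝ) :=
  List.ofFn (fun i : Fin n => ω i)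

/-- `ω` is an infinite reduced expression. -/
def IsInfRedExpr (Φ Pos : Set V) (ω : ℕ → V × ℝ) : Prop :=
  ∀ n, IsReducedWord Φ Pos (prefixWord ω n)

/-- The inversion set of an infinite reduced expression. -/
def infInvSet (Φ Pos : Set V) (ω : ℕ → V × ℝ) : Set (V × ℝ) :=
  ⋃ n, invSetOf Φ Pos (wordProd (prefixWord ω n))

/-- The action `x·Γ = (Φ_x \ x(−Γ)) ∪ (x(Γ) \ (−Φ_x))` of the affine Weyl group on
biclosed sets. -/
def dotAct (Φ Pos : Set V) (x : Equiv.Perm (V × ℝ)) (Γ : Set (V × ℝ)) : Set (V × ℝ) :=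
  (invSetOf Φ Pos x \ (⇑x '' (-Γ))) ∪ ((⇑x '' Γ) \ (-(invSetOf Φ Pos x)))

end AffineBiclosed

namespace AffineBiclosed

variable {V : Type*} [NormedAddCommGroup V] [InnerProductSpace ℝ V]

open Classical in
/-- The function `d_L : Φ⁺ → ℕ`: for `α ∈ Φ⁺_{L,∅}`, the maximal `n` such that `α` can be
written as the sum of `n` elements of `Φ⁺_{L,∅}`; and `0` otherwise. -/
noncomputable def dL (Φ Pos L : Set V) (α : V) : ℕ :=
  if α ∈ posLM Φ Pos L ∅ then
    sSup {n : ℕ | ∃ l : List V, l.length = n ∧ (∀ β ∈ l, β ∈ posLM Φ Pos L ∅) ∧ l.sum = α}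
  else 0

end AffineBiclosed

/-!
Simple roots are pairwise obtuse and lie in an open half-space, hence are linearly independent,
so there is a linear functional `g` (the `L`-height) that is `0` on the simple roots in `L` and
`1` on the others. On `Φ⁺` it coincides with `d_L`, which is therefore linear. Every element of
`Φ⁺_{L,∅}` has `L`-height at least `1`, so `d_L ≤ g`. Conversely a decomposition of `α` into
`g α` elements of `Φ⁺_{L,∅}` is built by induction on `α`: take a simple `s` with `⟪α, s⟫ > 0`;
if `s ∉ L`, then `α - s ∈ Φ⁺` and `s` splits off, and if `s ∈ L`, the reflection in `s`
preserves `Φ⁺_{L,∅}` and `g` and makes `α` smaller.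
-/

@[elab_as_elim]
theorem Set.Finite.induction_of_lt {ι α : Type*} [LinearOrder α] {s : Set ι} (hs : s.Finite)
    (f : ι → α) {P : ι → Prop} (h : ∀ a ∈ s, (∀ b ∈ s, f b < f a → P b) → P a) {a : ι}
    (ha : a ∈ s) : P a :=
  (Set.wellFoundedOn_image.1 ((hs.image f).wellFoundedOn (r := (· < ·)))).induction ha h

theorem eq_zero_of_sum_smul_eq_zero {M : Type*} [AddCommGroup M] [Module ℝ M] {T : Finset M}
    {c : M → ℝ} (f : M →ₗ[ℝ] ℝ) (hf : ∀ t ∈ T, 0 < f t) (hc : ∀ t ∈ T, 0 ≤ c t)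
    (h : ∑ t ∈ T, c t • t = 0) {t : M} (ht : t ∈ T) : c t = 0 := by
  have hsum : ∑ t ∈ T, c t * f t = 0 := by simpa using congr(f $h)
  have := (Finset.sum_eq_zero_iff_of_nonneg fun t ht => mul_nonneg (hc t ht) (hf t ht).le).1
    hsum t ht
  exact (mul_eq_zero.1 this).resolve_right (hf t ht).ne'

theorem linearIndepOn_of_pairwise_inner_nonpos {V : Type*} [NormedAddCommGroup V]
    [InnerProductSpace ℝ V] {S : Set V} (f : V →ₗ[ℝ] ℝ) (hf : ∀ s ∈ S, 0 < f s)
    (hS : S.Pairwise fun s t => ⟪s, t⟫ ≤ 0) : LinearIndepOn ℝ id S := by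
  classical
  rw [linearIndepOn_iff]
  intro l hl hsum
  rw [Finsupp.linearCombination_apply, Finsupp.sum] at hsum
  set T := l.support
  have hlT : ∀ t ∈ T, t ∈ S := fun t ht => hl ht
  -- Splitting `l = p - q` into positive and negative parts gives `u = ∑ p t • t = ∑ q t • t`,
  -- and pairing the two sums shows `⟪u, u⟫ ≤ 0`.
  set p : V → ℝ := fun t => max (l t) 0
  set q : V → ℝ := fun t => max (-l t) 0
  have hpq : ∀ t, p t * q t = 0 := fun t => by
    rcases le_total (l t) 0 with h | h <;> simp [p, q, h]
  set u := ∑ t ∈ T, p t • t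
  have hu : u = ∑ t ∈ T, q t • t := by
    rw [← sub_eq_zero, ← Finset.sum_sub_distrib, ← hsum]
    refine Finset.sum_congr rfl fun t _ => ?_
    rw [← sub_smul]
    congr 1
    rcases le_total (l t) 0 with h | h <;> simp [p, q, h]
  have huu : ⟪u, u⟫ ≤ 0 := by
    conv_lhs => arg 2; rw [hu]
    simp only [u, sum_inner, inner_sum, real_inner_smul_left, real_inner_smul_right]
    refine Finset.sum_nonpos fun s hs => Finset.sum_nonpos fun t ht => ?_
    by_cases hst : s = t
    · rw [hst, ← mul_assoc, hpq, zero_mul]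
    · exact mul_nonpos_of_nonneg_of_nonpos (le_max_right _ _) <|
        mul_nonpos_of_nonneg_of_nonpos (le_max_right _ _) (hS (hlT t ht) (hlT s hs) (Ne.symm hst))
  have hu0 : u = 0 := real_inner_self_nonpos.1 huu
  ext t
  by_cases ht : t ∈ T
  · have hf' : ∀ t ∈ T, 0 < f t := fun t ht => hf t (hlT t ht)
    have hp := eq_zero_of_sum_smul_eq_zero f hf' (fun t _ => le_max_right _ _) hu0 ht
    have hq := eq_zero_of_sum_smul_eq_zero f hf' (fun t _ => le_max_right _ _) (hu ▸ hu0) ht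
    simp only [max_eq_right_iff, Right.neg_nonpos_iff] at hp hq
    simpa using le_antisymm hp hq
  · simpa [T] using ht

namespace AffineBiclosed

open Submodule (span)

variable {V : Type*} [NormedAddCommGroup V] [InnerProductSpace ℝ V]

namespace IsIrrCrystRootSystem

variable {Φ : Set V}

theorem ne_zero (hΦ : IsIrrCrystRootSystem Φ) {a : V} (ha : a ∈ Φ) : a ≠ 0 :=
  fun h => hΦ.nonzero (h ▸ ha)

theorem inner_self_pos (hΦ : IsIrrCrystRootSystem Φ) {a : V} (ha : a ∈ Φ) : 0 < ⟪a, a⟫ :=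
  real_inner_self_pos.2 (hΦ.ne_zero ha)

theorem neg_mem (hΦ : IsIrrCrystRootSystem Φ) {a : V} (ha : a ∈ Φ) : -a ∈ Φ := by
  have h := hΦ.reflect_mem a ha a ha
  rwa [mul_div_assoc, div_self (hΦ.inner_self_pos ha).ne', mul_one, two_smul,
    sub_add_cancel_left] at h

theorem sub_mem_of_inner_pos (hΦ : IsIrrCrystRootSystem Φ) {a b : V} (ha : a ∈ Φ) (hb : b ∈ Φ)
    (hab : 0 < ⟪a, b⟫) (hne : a ≠ b) : a - b ∈ Φ := by
  obtain ⟨k, hk⟩ := hΦ.crystallographic b hb a ha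
  obtain ⟨k', hk'⟩ := hΦ.crystallographic a ha b hb
  have haa := hΦ.inner_self_pos ha
  have hbb := hΦ.inner_self_pos hb
  by_cases h1 : k = 1
  · have h := hΦ.reflect_mem b hb a ha
    rwa [← hk, h1, Int.cast_one, one_smul] at h
  by_cases h1' : k' = 1
  · have h := hΦ.neg_mem (hΦ.reflect_mem a ha b hb)
    rwa [← hk', h1', Int.cast_one, one_smul, neg_sub] at h
  -- Otherwise both Cartan integers are at least `2`, which forces `‖a - b‖² ≤ 0`.
  have two_le {m : ℤ} (hm : (0 : ℝ) < m) (hm1 : m ≠ 1) : (2 : ℝ) ≤ m := by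
    have : 0 < m := by exact_mod_cast hm
    exact_mod_cast (by omega : 2 ≤ m)
  have hk2 := two_le (hk ▸ by positivity) h1
  have hk'2 := two_le (hk' ▸ by rw [real_inner_comm]; positivity) h1'
  rw [hk, le_div_iff₀ hbb] at hk2
  rw [hk', le_div_iff₀ haa, real_inner_comm a b] at hk'2
  have : ⟪a - b, a - b⟫ ≤ 0 := by rw [real_inner_sub_sub_self]; linarith
  exact absurd (sub_eq_zero.1 (real_inner_self_nonpos.1 this)) hne

end IsIrrCrystRootSystem

section PositiveSystem

variable {Φ Pos : Set V} {f : V →ₗ[ℝ] ℝ}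

theorem mem_pos_iff (hP : Pos = {α ∈ Φ | 0 < f α}) {a : V} : a ∈ Pos ↔ a ∈ Φ ∧ 0 < f a := by
  rw [hP]
  rfl

theorem pos_subset (hP : Pos = {α ∈ Φ | 0 < f α}) : Pos ⊆ Φ :=
  fun _ ha => ((mem_pos_iff hP).1 ha).1

theorem mem_pos_or_neg_mem_pos (hΦ : IsIrrCrystRootSystem Φ) (hf : ∀ α ∈ Φ, f α ≠ 0)
    (hP : Pos = {α ∈ Φ | 0 < f α}) {a : V} (ha : a ∈ Φ) : a ∈ Pos ∨ -a ∈ Pos := by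
  rcases (hf a ha).lt_or_gt with h | h
  · exact .inr ((mem_pos_iff hP).2 ⟨hΦ.neg_mem ha, by simpa using h⟩)
  · exact .inl ((mem_pos_iff hP).2 ⟨ha, h⟩)

theorem exists_list_simples_sum_eq (hfin : Φ.Finite) (hP : Pos = {α ∈ Φ | 0 < f α}) {a : V}
    (ha : a ∈ Pos) : ∃ l : List V, (∀ s ∈ l, s ∈ simples Pos) ∧ l.sum = a := by
  refine (hfin.subset (pos_subset hP)).induction_of_lt f (fun a ha ih => ?_) ha
  by_cases hs : a ∈ simples Pos
  · exact ⟨[a], by simpa using hs, by simp⟩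
  obtain ⟨b, hb, c, hc, rfl⟩ : ∃ b ∈ Pos, ∃ c ∈ Pos, a = b + c := by
    by_contra h
    exact hs ⟨ha, h⟩
  obtain ⟨lb, hlb, rfl⟩ := ih b hb (by simpa using ((mem_pos_iff hP).1 hc).2)
  obtain ⟨lc, hlc, rfl⟩ := ih c hc (by simpa using ((mem_pos_iff hP).1 hb).2)
  exact ⟨lb ++ lc, fun s hs => (List.mem_append.1 hs).elim (hlb s) (hlc s), List.sum_append⟩

theorem exists_simple_inner_pos (hΦ : IsIrrCrystRootSystem Φ) (hP : Pos = {α ∈ Φ | 0 < f α})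
    {a : V} (ha : a ∈ Pos) : ∃ s ∈ simples Pos, 0 < ⟪a, s⟫ := by
  by_contra! h
  obtain ⟨l, hl, hsum⟩ := exists_list_simples_sum_eq hΦ.finite hP ha
  have : ⟪a, l.sum⟫ ≤ 0 := by
    rw [← innerₛₗ_apply_apply (𝕜 := ℝ), map_list_sum]
    refine (List.sum_le_card_nsmul _ 0 ?_).trans_eq (smul_zero _)
    simpa using fun s hs => h s (hl s hs)
  rw [hsum] at this
  exact (hΦ.inner_self_pos (pos_subset hP ha)).not_ge this

theorem sub_simple_mem_pos (hΦ : IsIrrCrystRootSystem Φ) (hf : ∀ α ∈ Φ, f α ≠ 0)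
    (hP : Pos = {α ∈ Φ | 0 < f α}) {a s : V} (ha : a ∈ Pos) (hs : s ∈ simples Pos)
    (has : 0 < ⟪a, s⟫) (hne : a ≠ s) : a - s ∈ Pos :=
  (mem_pos_or_neg_mem_pos hΦ hf hP
    (hΦ.sub_mem_of_inner_pos (pos_subset hP ha) (pos_subset hP hs.1) has hne)).resolve_right
    fun h => hs.2 ⟨s - a, by simpa using h, a, ha, by abel⟩

theorem inner_simples_nonpos (hΦ : IsIrrCrystRootSystem Φ) (hf : ∀ α ∈ Φ, f α ≠ 0)
    (hP : Pos = {α ∈ Φ | 0 < f α}) {s t : V} (hs : s ∈ simples Pos) (ht : t ∈ simples Pos)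
    (hne : s ≠ t) : ⟪s, t⟫ ≤ 0 := by
  by_contra! h
  exact hs.2 ⟨s - t, sub_simple_mem_pos hΦ hf hP hs.1 ht h hne, t, ht.1, by abel⟩

theorem linearIndepOn_simples (hΦ : IsIrrCrystRootSystem Φ) (hf : ∀ α ∈ Φ, f α ≠ 0)
    (hP : Pos = {α ∈ Φ | 0 < f α}) : LinearIndepOn ℝ id (simples Pos) :=
  linearIndepOn_of_pairwise_inner_nonpos f (fun _ hs => ((mem_pos_iff hP).1 hs.1).2)
    fun _ hs _ ht hne => inner_simples_nonpos hΦ hf hP hs ht hne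

theorem eq_of_mem_span_singleton (hΦ : IsIrrCrystRootSystem Φ) (hP : Pos = {α ∈ Φ | 0 < f α})
    {a s : V} (ha : a ∈ Pos) (hs : s ∈ Pos) (h : a ∈ span ℝ {s}) : a = s := by
  obtain ⟨t, rfl⟩ := Submodule.mem_span_singleton.1 h
  rcases hΦ.reduced s (pos_subset hP hs) t (pos_subset hP ha) with rfl | rfl
  · exact one_smul ℝ s
  · have hfa := ((mem_pos_iff hP).1 ha).2
    have hfs := ((mem_pos_iff hP).1 hs).2
    simp only [neg_smul, one_smul, map_neg, Left.neg_pos_iff] at hfa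
    exact absurd hfa hfs.not_gt

end PositiveSystem

noncomputable def rootReflection (s : V) : V →ₗ[ℝ] V :=
  Module.preReflection s ((2 / ⟪s, s⟫) • innerₛₗ ℝ s)

theorem rootReflection_apply (s x : V) :
    rootReflection s x = x - (2 * ⟪x, s⟫ / ⟪s, s⟫) • s := by
  rw [rootReflection, Module.preReflection_apply, LinearMap.smul_apply, innerₛₗ_apply_apply,
    smul_eq_mul, real_inner_comm s x, div_mul_eq_mul_div]

theorem rootReflection_involutive {s : V} (hs : s ≠ 0) :
    Function.Involutive (rootReflection s) :=
  Module.involutive_preReflection <| by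
    rw [LinearMap.smul_apply, innerₛₗ_apply_apply, smul_eq_mul,
      div_mul_cancel₀ _ (inner_self_ne_zero.2 hs)]

open Classical in
/-- `g` is the `L`-height: on a positive root it counts, with multiplicity, the simple roots
outside `L` in its expansion. -/
def IsRelHeight (Pos L : Set V) (g : V →ₗ[ℝ] ℝ) : Prop :=
  ∀ s ∈ simples Pos, g s = if s ∈ L then 0 else 1

section RelHeight

variable {Φ Pos L : Set V} {f g : V →ₗ[ℝ] ℝ}

theorem exists_isRelHeight (hΦ : IsIrrCrystRootSystem Φ) (hf : ∀ α ∈ Φ, f α ≠ 0)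
    (hP : Pos = {α ∈ Φ | 0 < f α}) (L : Set V) : ∃ g, IsRelHeight Pos L g := by
  classical
  have hli := linearIndepOn_simples hΦ hf hP
  refine ⟨(Module.Basis.extend hli).constr ℝ fun b => if (b : V) ∈ L then 0 else 1,
    fun s hs => ?_⟩
  have h := (Module.Basis.extend hli).constr_basis ℝ (fun b => if (b : V) ∈ L then (0 : ℝ) else 1)
    ⟨s, hli.subset_extend _ hs⟩
  rwa [Module.Basis.extend_apply_self] at h

namespace IsRelHeight

theorem map_eq_zero_of_mem_span (hg : IsRelHeight Pos L g) (hL : L ⊆ simples Pos) {a : V}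
    (ha : a ∈ span ℝ L) : g a = 0 :=
  LinearMap.mem_ker.1 <| Submodule.span_le.2 (fun s hs => by simp [hg s (hL hs), hs]) ha

theorem exists_natCast_eq (hg : IsRelHeight Pos L g) (l : List V)
    (hl : ∀ s ∈ l, s ∈ simples Pos) : ∃ n : ℕ, g l.sum = n ∧ (n = 0 → l.sum ∈ span ℝ L) := by
  induction l with
  | nil => exact ⟨0, by simp, fun _ => zero_mem _⟩
  | cons s l ih =>
    obtain ⟨n, hn, hn0⟩ := ih fun t ht => hl t (List.mem_cons_of_mem _ ht)
    rw [List.sum_cons, map_add, hg s (hl s List.mem_cons_self), hn]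
    split_ifs with hsL
    · exact ⟨n, zero_add _, fun h => add_mem (Submodule.subset_span hsL) (hn0 h)⟩
    · exact ⟨n + 1, by push_cast; ring, fun h => absurd h n.succ_ne_zero⟩

theorem one_le (hg : IsRelHeight Pos L g) (hfin : Φ.Finite) (hP : Pos = {α ∈ Φ | 0 < f α})
    {a : V} (ha : a ∈ Pos) (haL : a ∉ span ℝ L) : 1 ≤ g a := by
  obtain ⟨l, hl, rfl⟩ := exists_list_simples_sum_eq hfin hP ha
  obtain ⟨n, hn, hn0⟩ := hg.exists_natCast_eq l hl
  rw [hn, Nat.one_le_cast, Nat.one_le_iff_ne_zero]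
  exact fun h => haL (hn0 h)

theorem length_le (hg : IsRelHeight Pos L g) (hfin : Φ.Finite) (hP : Pos = {α ∈ Φ | 0 < f α})
    (l : List V) (hl : ∀ b ∈ l, b ∈ Pos \ (span ℝ L : Set V)) : (l.length : ℝ) ≤ g l.sum := by
  rw [map_list_sum]
  refine (List.card_nsmul_le_sum _ 1 ?_).trans_eq' (by simp)
  simpa using fun b hb => hg.one_le hfin hP (hl b hb).1 (hl b hb).2

end IsRelHeight

theorem rootReflection_mem_pos (hΦ : IsIrrCrystRootSystem Φ) (hf : ∀ α ∈ Φ, f α ≠ 0)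
    (hP : Pos = {α ∈ Φ | 0 < f α}) {s a : V} (hs : s ∈ simples Pos) (ha : a ∈ Pos)
    (hne : a ≠ s) : rootReflection s a ∈ Pos := by
  rw [rootReflection_apply]
  set c := 2 * ⟪a, s⟫ / ⟪s, s⟫
  refine (mem_pos_or_neg_mem_pos hΦ hf hP
    (hΦ.reflect_mem s (pos_subset hP hs.1) a (pos_subset hP ha))).resolve_right fun hneg => ?_
  -- The `{s}`-height is `≥ 1` on both `a` and `c • s - a`, yet these values are opposite.
  have has : a ∉ span ℝ {s} := fun h => hne (eq_of_mem_span_singleton hΦ hP ha hs.1 h)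
  have hneg_s : -(a - c • s) ∉ span ℝ {s} := fun h => has <|
    (Submodule.sub_mem_iff_left _ (Submodule.smul_mem _ c (Submodule.mem_span_singleton_self s))).1
      ((Submodule.neg_mem_iff _).1 h)
  obtain ⟨g, hg⟩ := exists_isRelHeight hΦ hf hP {s}
  have hgs : g s = 0 := by rw [hg s hs, if_pos (Set.mem_singleton s)]
  have h1 := hg.one_le hΦ.finite hP ha has
  have h2 := hg.one_le hΦ.finite hP hneg hneg_s
  rw [map_neg, map_sub, map_smul, hgs, smul_zero, sub_zero] at h2
  linarith

theorem rootReflection_mem_pos_diff_span (hΦ : IsIrrCrystRootSystem Φ) (hf : ∀ α ∈ Φ, f α ≠ 0)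
    (hP : Pos = {α ∈ Φ | 0 < f α}) {s a : V} (hs : s ∈ simples Pos) (hsL : s ∈ L)
    (ha : a ∈ Pos \ (span ℝ L : Set V)) : rootReflection s a ∈ Pos \ (span ℝ L : Set V) := by
  have hsspan : s ∈ span ℝ L := Submodule.subset_span hsL
  refine ⟨rootReflection_mem_pos hΦ hf hP hs ha.1 (by rintro rfl; exact ha.2 hsspan),
    fun h => ha.2 ?_⟩
  rw [SetLike.mem_coe, rootReflection_apply] at h
  exact (Submodule.sub_mem_iff_left _ (Submodule.smul_mem _ _ hsspan)).1 h

theorem exists_list_length_eq_relHeight (hΦ : IsIrrCrystRootSystem Φ) (hf : ∀ α ∈ Φ, f α ≠ 0)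
    (hP : Pos = {α ∈ Φ | 0 < f α}) (hL : L ⊆ simples Pos) (hg : IsRelHeight Pos L g) {a : V}
    (ha : a ∈ Pos \ (span ℝ L : Set V)) :
    ∃ l : List V, (l.length : ℝ) = g a ∧ (∀ b ∈ l, b ∈ Pos \ (span ℝ L : Set V)) ∧ l.sum = a := by
  obtain ⟨haP, haL⟩ := ha
  revert haL
  refine (hΦ.finite.subset (pos_subset hP)).induction_of_lt f (fun a haP ih haL => ?_) haP
  by_cases h1 : g a = 1
  · exact ⟨[a], by simp [h1], by simpa using ⟨haP, haL⟩, by simp⟩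
  obtain ⟨s, hs, has⟩ := exists_simple_inner_pos hΦ hP haP
  have hfs : 0 < f s := ((mem_pos_iff hP).1 hs.1).2
  by_cases hsL : s ∈ L
  · -- Reflecting in `s ∈ L` lowers `f` but keeps `g`; reflect a decomposition of `r_s a` back.
    have hs0 : s ≠ 0 := hΦ.ne_zero (pos_subset hP hs.1)
    have hgs : g s = 0 := by rw [hg s hs, if_pos hsL]
    have hfr : f (rootReflection s a) < f a := by
      rw [rootReflection_apply, map_sub, map_smul, smul_eq_mul, sub_lt_self_iff]
      exact mul_pos (by have := hΦ.inner_self_pos (pos_subset hP hs.1); positivity) hfs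
    have hr := rootReflection_mem_pos_diff_span hΦ hf hP hs hsL ⟨haP, haL⟩
    obtain ⟨l, hlen, hl, hsum⟩ := ih _ hr.1 hfr hr.2
    refine ⟨l.map (rootReflection s), ?_, ?_, ?_⟩
    · rw [List.length_map, hlen, rootReflection_apply, map_sub, map_smul, hgs, smul_zero,
        sub_zero]
    · simpa using fun b hb => rootReflection_mem_pos_diff_span hΦ hf hP hs hsL (hl b hb)
    · rw [← map_list_sum, hsum, rootReflection_involutive hs0]
  · -- Otherwise `a - s` is a positive root of `L`-height `g a - 1`.
    have hgs : g s = 1 := by rw [hg s hs, if_neg hsL]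
    have hne : a ≠ s := by rintro rfl; exact h1 hgs
    have hsub := sub_simple_mem_pos hΦ hf hP haP hs has hne
    have hsubL : a - s ∉ span ℝ L := fun h => h1 <| by
      simpa [hgs, sub_eq_zero] using hg.map_eq_zero_of_mem_span hL h
    have hsspan : s ∉ span ℝ L := fun h => by
      simpa [hgs] using hg.map_eq_zero_of_mem_span hL h
    obtain ⟨l, hlen, hl, hsum⟩ := ih _ hsub (by simpa using hfs) hsubL
    refine ⟨s :: l, ?_, ?_, by rw [List.sum_cons, hsum, add_sub_cancel]⟩
    · rw [List.length_cons, Nat.cast_succ, hlen, map_sub, hgs, sub_add_cancel]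
    · exact List.forall_mem_cons.2 ⟨⟨hs.1, hsspan⟩, hl⟩

theorem posLM_empty (hΦ : IsIrrCrystRootSystem Φ) (hP : Pos = {α ∈ Φ | 0 < f α}) :
    posLM Φ Pos L ∅ = Pos \ (span ℝ L : Set V) := by
  have hempty : subsys Φ (∅ : Set V) = ∅ := by
    ext x
    simpa [subsys] using fun hx h0 => hΦ.ne_zero hx h0
  rw [posLM, hempty, Set.union_empty]
  ext a
  simp only [subsys, Set.mem_sdiff, Set.mem_inter_iff]
  exact and_congr_right fun ha => by simp [pos_subset hP ha]

theorem dL_eq_relHeight (hΦ : IsIrrCrystRootSystem Φ) (hf : ∀ α ∈ Φ, f α ≠ 0)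
    (hP : Pos = {α ∈ Φ | 0 < f α}) (hL : L ⊆ simples Pos) (hg : IsRelHeight Pos L g) {a : V}
    (ha : a ∈ Pos) : (dL Φ Pos L a : ℝ) = g a := by
  rw [dL, posLM_empty hΦ hP]
  by_cases haL : a ∈ span ℝ L
  · rw [if_neg fun h => h.2 haL, hg.map_eq_zero_of_mem_span hL haL, Nat.cast_zero]
  obtain ⟨l, hlen, hl, hsum⟩ := exists_list_length_eq_relHeight hΦ hf hP hL hg ⟨ha, haL⟩
  have hgreatest : IsGreatest {n : ℕ | ∃ l : List V, l.length = n ∧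
      (∀ β ∈ l, β ∈ Pos \ (span ℝ L : Set V)) ∧ l.sum = a} l.length := by
    refine ⟨⟨l, rfl, hl, hsum⟩, ?_⟩
    rintro n ⟨l', rfl, hl', hsum'⟩
    have := hg.length_le hΦ.finite hP l' hl'
    rw [hsum', ← hlen] at this
    exact_mod_cast this
  rw [if_pos ⟨ha, haL⟩, hgreatest.csSup_eq, hlen]

end RelHeight

end AffineBiclosed

open AffineBiclosed in
theorem dL_additive_general
    {V : Type*} [NormedAddCommGroup V] [InnerProductSpace ℝ V]
    {Φ Pos : Set V} (hΦ : IsIrrCrystRootSystem Φ) (hPos : IsPositiveSystem Φ Pos)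
    {L : Set V} (hL : L ⊂ simples Pos)
    {α β γ : V} (hα : α ∈ Pos) (hβ : β ∈ Pos) (hγ : γ ∈ Pos)
    {k₁ k₂ : ℝ} (h : α = k₁ • β + k₂ • γ) :
    (dL Φ Pos L α : ℝ) = k₁ * dL Φ Pos L β + k₂ * dL Φ Pos L γ := by
  obtain ⟨f, hf, hP⟩ := hPos
  obtain ⟨g, hg⟩ := exists_isRelHeight hΦ hf hP L
  rw [dL_eq_relHeight hΦ hf hP hL.subset hg hα, dL_eq_relHeight hΦ hf hP hL.subset hg hβ,
    dL_eq_relHeight hΦ hf hP hL.subset hg hγ, h, map_add, map_smul, map_smul, smul_eq_mul,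
    smul_eq_mul]

open AffineBiclosed in
/-- If `α = k₁β + k₂γ` with `α, β, γ ∈ Φ⁺` and `k₁, k₂ ∈ ℝ_{≥0}`, then
`d_L(α) = k₁·d_L(β) + k₂·d_L(γ)`. -/
theorem dL_additive
    {V : Type*} [NormedAddCommGroup V] [InnerProductSpace ℝ V]
    {Φ Pos : Set V} (hΦ : IsIrrCrystRootSystem Φ) (hPos : IsPositiveSystem Φ Pos)
    {L : Set V} (hL : L ⊂ simples Pos)
    {α β γ : V} (hα : α ∈ Pos) (hβ : β ∈ Pos) (hγ : γ ∈ Pos)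
    {k₁ k₂ : ℝ} (hk₁ : 0 ≤ k₁) (hk₂ : 0 ≤ k₂) (h : α = k₁ • β + k₂ • γ) :
    (dL Φ Pos L α : ℝ) = k₁ * dL Φ Pos L β + k₂ * dL Φ Pos L γ :=
  dL_additive_general hΦ hPos hL hα hβ hγ h
end
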